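/- arXiv:1307.7359 — 4 statements merged into one kernel-verified Lean document; each statement's English description precedes it below -/
import Mathlib

section
/- If Λ ⊂ ℝ is a sampling sequence for B¹_π (that is, there exists C < ∞ with sup_ℝ|F'| ≤ C · sup_k |(F(λ_{k+1})-F(λ_k))/(λ_{k+1}-λ_k)| for all F ∈ B¹_π), then Λ is relatively dense: there exists R > 0 such that Λ ∩ (ξ - R, ξ + R) ≠ ∅ for every ξ ∈ ℝ. -/
/-!
Suppose `Λ` misses `(ξ - R, ξ + R)`. Test the sampling inequality on
`F(z) = sin² (z - ξ) / (z - ξ)`, which lies in `B¹_2 ⊂ B¹_π` and has `F'(ξ) = 1`. On the real line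
away from `(ξ - R, ξ + R)` we have `|F| ≤ 1/R` and `|F'| ≤ 2/R`, so every difference quotient over
consecutive points of `Λ` is at most `2/R`: by the mean value theorem when both points lie on the
same side of `ξ`, and by the bound on `|F|` when they lie on opposite sides, hence at distance
at least `2R`. The sampling inequality then gives `1 ≤ 2C/R`, which fails once `R > 2|C|`.
-/

open Complex

noncomputable section

/-- `F` is (entire) of exponential type `τ`. -/
def ExpType (τ : ℝ) (F : ℂ → ℂ) : Prop :=
  ∃ C : ℝ, ∀ z : ℂ, ‖F z‖ ≤ C * Real.exp (τ * ‖z‖)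

/-- The space `B¹_τ`: entire functions of exponential type `τ`
with bounded derivative on the real line. -/
def MemB1 (τ : ℝ) (F : ℂ → ℂ) : Prop :=
  Differentiable ℂ F ∧ ExpType τ F ∧ ∃ M : ℝ, ∀ x : ℝ, ‖deriv F x‖ ≤ M

/-- The Bernstein space `B_τ`: entire functions of exponential type `τ`
bounded on the real line. -/
def MemB (τ : ℝ) (F : ℂ → ℂ) : Prop :=
  Differentiable ℂ F ∧ ExpType τ F ∧ ∃ M : ℝ, ∀ x : ℝ, ‖F x‖ ≤ M

namespace ExpType

variable {τ σ : ℝ} {F : ℂ → ℂ}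

lemma nonneg_const {C : ℝ} (hC : ∀ z : ℂ, ‖F z‖ ≤ C * Real.exp (τ * ‖z‖)) : 0 ≤ C := by
  simpa using (norm_nonneg (F 0)).trans (hC 0)

lemma mono (hτσ : τ ≤ σ) (hF : ExpType τ F) : ExpType σ F := by
  obtain ⟨C, hC⟩ := hF
  refine ⟨C, fun z => (hC z).trans ?_⟩
  gcongr
  exact nonneg_const hC

lemma comp_sub (hτ : 0 ≤ τ) (hF : ExpType τ F) (a : ℂ) : ExpType τ (fun z => F (z - a)) := by
  obtain ⟨C, hC⟩ := hF
  refine ⟨C * Real.exp (τ * ‖a‖), fun z => ?_⟩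
  calc ‖F (z - a)‖ ≤ C * Real.exp (τ * ‖z - a‖) := hC _
    _ ≤ C * Real.exp (τ * (‖a‖ + ‖z‖)) := by
      gcongr
      · exact nonneg_const hC
      · rw [add_comm]; exact norm_sub_le z a
    _ = C * Real.exp (τ * ‖a‖) * Real.exp (τ * ‖z‖) := by
      rw [mul_add, Real.exp_add, mul_assoc]

lemma of_continuous (hτ : 0 ≤ τ) (hF : Continuous F) {C : ℝ}
    (hC : ∀ z : ℂ, 1 ≤ ‖z‖ → ‖F z‖ ≤ C * Real.exp (τ * ‖z‖)) : ExpType τ F := by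
  obtain ⟨K, hK⟩ := (isCompact_closedBall (0 : ℂ) 1).exists_bound_of_continuousOn hF.continuousOn
  have hK0 : 0 ≤ K := (norm_nonneg _).trans (hK 0 (Metric.mem_closedBall_self zero_le_one))
  refine ⟨max K C, fun z => ?_⟩
  rcases le_or_gt ‖z‖ 1 with hz | hz
  · calc ‖F z‖ ≤ K := hK z (by simpa using hz)
      _ ≤ max K C * 1 := by simp
      _ ≤ max K C * Real.exp (τ * ‖z‖) :=
        mul_le_mul_of_nonneg_left (Real.one_le_exp (by positivity)) (hK0.trans (le_max_left _ _))
  · exact (hC z hz.le).trans (by gcongr; exact le_max_right _ _)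

end ExpType

namespace MemB1

variable {τ σ : ℝ} {F : ℂ → ℂ}

lemma mono (hτσ : τ ≤ σ) (hF : MemB1 τ F) : MemB1 σ F :=
  ⟨hF.1, hF.2.1.mono hτσ, hF.2.2⟩

lemma comp_sub_ofReal (hτ : 0 ≤ τ) (hF : MemB1 τ F) (ξ : ℝ) :
    MemB1 τ (fun z => F (z - ξ)) := by
  obtain ⟨hdiff, htype, M, hM⟩ := hF
  refine ⟨hdiff.comp (differentiable_id.sub_const _), htype.comp_sub hτ _, M, fun x => ?_⟩
  rw [deriv_comp_sub_const, ← ofReal_sub]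
  exact hM _

end MemB1

lemma Complex.norm_sin_le_exp_norm (z : ℂ) : ‖sin z‖ ≤ Real.exp ‖z‖ := by
  have h (w : ℂ) : ‖exp (w * I)‖ ≤ Real.exp ‖w‖ := by
    simpa using norm_exp_le_exp_norm (w * I)
  rw [sin, norm_div, norm_mul, norm_I, mul_one, Complex.norm_two]
  have hneg := h (-z)
  rw [norm_neg] at hneg
  linarith [norm_sub_le (exp (-z * I)) (exp (z * I)), h z]

/-- At `w = 0` the junk value `x / 0 = 0` agrees with the limit, so this function is entire. -/
def sinSqDiv (w : ℂ) : ℂ := sin w ^ 2 / w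

lemma sinSqDiv_eq_sin_mul_dslope : sinSqDiv = fun w => sin w * dslope sin 0 w := by
  ext w
  rcases eq_or_ne w 0 with rfl | hw
  · simp [sinSqDiv]
  · rw [dslope_of_ne _ hw, slope_def_field, sinSqDiv, sin_zero, sub_zero, sub_zero, sq,
      mul_div_assoc]

lemma differentiable_dslope_sin : Differentiable ℂ (dslope sin 0) := by
  rw [← differentiableOn_univ, differentiableOn_dslope Filter.univ_mem]
  exact differentiable_sin.differentiableOn

lemma differentiable_sinSqDiv : Differentiable ℂ sinSqDiv := by
  rw [sinSqDiv_eq_sin_mul_dslope]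
  exact differentiable_sin.mul differentiable_dslope_sin

lemma hasDerivAt_sinSqDiv_zero : HasDerivAt sinSqDiv 1 0 := by
  rw [sinSqDiv_eq_sin_mul_dslope]
  refine ((hasDerivAt_sin 0).mul (differentiable_dslope_sin 0).hasDerivAt).congr_deriv ?_
  simp [dslope_same]

lemma hasDerivAt_sinSqDiv {w : ℂ} (hw : w ≠ 0) :
    HasDerivAt sinSqDiv (sin (2 * w) / w - (sin w / w) ^ 2) w := by
  refine (((hasDerivAt_sin w).pow 2).div (hasDerivAt_id w) hw).congr_deriv ?_
  simp only [id, Pi.pow_apply, sin_two_mul]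
  field_simp
  ring

lemma expType_sinSqDiv : ExpType 2 sinSqDiv := by
  refine ExpType.of_continuous zero_le_two differentiable_sinSqDiv.continuous (C := 1)
    fun w hw => ?_
  calc ‖sinSqDiv w‖ = ‖sin w‖ ^ 2 / ‖w‖ := by rw [sinSqDiv, norm_div, norm_pow]
    _ ≤ Real.exp ‖w‖ ^ 2 / 1 := by gcongr; exact norm_sin_le_exp_norm w
    _ = 1 * Real.exp (2 * ‖w‖) := by rw [div_one, one_mul, ← Real.exp_nat_mul]; norm_num

lemma sinSqDiv_ofReal (t : ℝ) : sinSqDiv t = ↑(Real.sin t ^ 2 / t) := by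
  simp [sinSqDiv, ofReal_sin]

lemma deriv_sinSqDiv_ofReal {t : ℝ} (ht : t ≠ 0) :
    deriv sinSqDiv t = ↑(Real.sin (2 * t) / t - (Real.sin t / t) ^ 2) := by
  rw [(hasDerivAt_sinSqDiv (ofReal_ne_zero.2 ht)).deriv]
  push_cast
  rfl

lemma norm_sinSqDiv_ofReal_le (t : ℝ) : ‖sinSqDiv t‖ ≤ 1 / |t| := by
  rw [sinSqDiv_ofReal, norm_real, Real.norm_eq_abs, abs_div, abs_of_nonneg (sq_nonneg _)]
  gcongr
  exact Real.sin_sq_le_one t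

lemma norm_deriv_sinSqDiv_ofReal_le_three (t : ℝ) : ‖deriv sinSqDiv t‖ ≤ 3 := by
  rcases eq_or_ne t 0 with rfl | ht
  · simp [hasDerivAt_sinSqDiv_zero.deriv]
  rw [deriv_sinSqDiv_ofReal ht, norm_real, Real.norm_eq_abs]
  have h1 : |Real.sin (2 * t) / t| ≤ 2 := by
    rw [abs_div, div_le_iff₀ (abs_pos.2 ht)]
    simpa [abs_mul] using Real.abs_sin_le_abs (x := 2 * t)
  have h2 : |(Real.sin t / t) ^ 2| ≤ 1 := by
    rw [abs_pow, abs_div]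
    exact pow_le_one₀ (by positivity) (div_le_one_of_le₀ Real.abs_sin_le_abs (abs_nonneg t))
  linarith [abs_sub (Real.sin (2 * t) / t) ((Real.sin t / t) ^ 2)]

lemma norm_deriv_sinSqDiv_ofReal_le {t : ℝ} (ht : 1 ≤ |t|) : ‖deriv sinSqDiv t‖ ≤ 2 / |t| := by
  have ht0 : 0 < |t| := one_pos.trans_le ht
  rw [deriv_sinSqDiv_ofReal (abs_pos.1 ht0), norm_real, Real.norm_eq_abs]
  have h1 : |Real.sin (2 * t) / t| ≤ 1 / |t| := by
    rw [abs_div]; gcongr; exact Real.abs_sin_le_one _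
  have h2 : |(Real.sin t / t) ^ 2| ≤ 1 / |t| := by
    rw [abs_pow, abs_div, div_pow]
    calc |Real.sin t| ^ 2 / |t| ^ 2 ≤ 1 / |t| ^ 2 := by
          gcongr; exact pow_le_one₀ (abs_nonneg _) (Real.abs_sin_le_one t)
      _ ≤ 1 / |t| := by gcongr; nlinarith
  calc _ ≤ |Real.sin (2 * t) / t| + |(Real.sin t / t) ^ 2| := abs_sub _ _
    _ ≤ 1 / |t| + 1 / |t| := add_le_add h1 h2
    _ = 2 / |t| := by ring

lemma memB1_sinSqDiv : MemB1 2 sinSqDiv :=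
  ⟨differentiable_sinSqDiv, expType_sinSqDiv, 3, norm_deriv_sinSqDiv_ofReal_le_three⟩

lemma norm_sub_le_of_le_abs {E : Type*} [NormedAddCommGroup E] [NormedSpace ℝ E]
    {f f' : ℝ → E} {R K : ℝ} (hf : ∀ t, R ≤ |t| → HasDerivAt f (f' t) t)
    (hbound : ∀ t, R ≤ |t| → ‖f t‖ ≤ K * R) (hderiv : ∀ t, R ≤ |t| → ‖f' t‖ ≤ K)
    {a b : ℝ} (ha : R ≤ |a|) (hb : R ≤ |b|) : ‖f b - f a‖ ≤ K * |b - a| := by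
  have same_side (s : Set ℝ) (hs : Convex ℝ s) (hsR : ∀ t ∈ s, R ≤ |t|) (has : a ∈ s)
      (hbs : b ∈ s) : ‖f b - f a‖ ≤ K * |b - a| :=
    hs.norm_image_sub_le_of_norm_hasDerivWithin_le
      (fun t ht => (hf t (hsR t ht)).hasDerivWithinAt) (fun t ht => hderiv t (hsR t ht)) has hbs
  have opposite_sides (hab : 2 * R ≤ |b - a|) : ‖f b - f a‖ ≤ K * |b - a| := by
    have hK : 0 ≤ K := (norm_nonneg _).trans (hderiv a ha)
    calc ‖f b - f a‖ ≤ ‖f b‖ + ‖f a‖ := norm_sub_le _ _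
      _ ≤ K * R + K * R := add_le_add (hbound b hb) (hbound a ha)
      _ = K * (2 * R) := by ring
      _ ≤ K * |b - a| := mul_le_mul_of_nonneg_left hab hK
  have hleft : ∀ t ∈ Set.Iic (-R), R ≤ |t| := fun t ht => le_abs'.2 (Or.inl ht)
  have hright : ∀ t ∈ Set.Ici R, R ≤ |t| := fun t ht => le_abs'.2 (Or.inr ht)
  rcases le_abs'.1 ha with ha' | ha' <;> rcases le_abs'.1 hb with hb' | hb'
  · exact same_side _ (convex_Iic _) hleft ha' hb'
  · exact opposite_sides ((by linarith : 2 * R ≤ b - a).trans (le_abs_self _))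
  · exact opposite_sides ((by linarith : 2 * R ≤ -(b - a)).trans (neg_le_abs _))
  · exact same_side _ (convex_Ici _) hright ha' hb'

lemma norm_div_ofReal_sub_le {F : ℂ → ℂ} {a b K : ℝ} (hK : 0 ≤ K)
    (h : ‖F b - F a‖ ≤ K * |b - a|) : ‖(F b - F a) / ((b : ℂ) - a)‖ ≤ K := by
  rw [norm_div, ← ofReal_sub, norm_real, Real.norm_eq_abs]
  exact div_le_of_le_mul₀ (abs_nonneg _) hK h

lemma norm_sinSqDiv_sub_le {R : ℝ} (hR : 1 ≤ R) {a b : ℝ} (ha : R ≤ |a|) (hb : R ≤ |b|) :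
    ‖sinSqDiv b - sinSqDiv a‖ ≤ 2 / R * |b - a| := by
  have hR0 : 0 < R := one_pos.trans_le hR
  refine norm_sub_le_of_le_abs (f := fun t : ℝ => sinSqDiv t)
    (f' := fun t : ℝ => deriv sinSqDiv t)
    (fun t _ => differentiable_sinSqDiv.differentiableAt.hasDerivAt.comp_ofReal)
    (fun t ht => ?_) (fun t ht => ?_) ha hb
  · calc ‖sinSqDiv t‖ ≤ 1 / |t| := norm_sinSqDiv_ofReal_le t
      _ ≤ 1 / R := by gcongr
      _ ≤ 2 / R * R := by
        rw [div_mul_cancel₀ _ hR0.ne']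
        exact ((div_le_one hR0).2 hR).trans one_le_two
  · calc ‖deriv sinSqDiv t‖ ≤ 2 / |t| := norm_deriv_sinSqDiv_ofReal_le (hR.trans ht)
      _ ≤ 2 / R := by gcongr

theorem stmt_3_general (lam : ℤ → ℝ)
    (hsamp : ∃ C : ℝ, ∀ F : ℂ → ℂ, MemB1 Real.pi F → ∀ B : ℝ,
      (∀ k : ℤ, ‖(F (lam (k + 1)) - F (lam k)) /
          ((lam (k + 1) : ℂ) - (lam k : ℂ))‖ ≤ B) →
      ∀ x : ℝ, ‖deriv F x‖ ≤ C * B) :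
    ∃ R > 0, ∀ ξ : ℝ, ∃ k : ℤ, lam k ∈ Set.Ioo (ξ - R) (ξ + R) := by
  obtain ⟨C, hC⟩ := hsamp
  set R := 2 * |C| + 1
  have hR1 : 1 ≤ R := by linarith [abs_nonneg C]
  refine ⟨R, by linarith, fun ξ => ?_⟩
  by_contra! hgap
  have hfar (k : ℤ) : R ≤ |lam k - ξ| := by
    simpa [← Real.ball_eq_Ioo, Real.dist_eq] using hgap k
  set F : ℂ → ℂ := fun z => sinSqDiv (z - ξ)
  have hquot (k : ℤ) : ‖(F (lam (k + 1)) - F (lam k)) / ((lam (k + 1) : ℂ) - lam k)‖ ≤ 2 / R := by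
    refine norm_div_ofReal_sub_le (by positivity) ?_
    simpa only [F, ← ofReal_sub, sub_sub_sub_cancel_right] using
      norm_sinSqDiv_sub_le hR1 (hfar k) (hfar (k + 1))
  have hF : MemB1 Real.pi F :=
    (memB1_sinSqDiv.mono Real.two_le_pi).comp_sub_ofReal Real.pi_pos.le ξ
  have hsample := hC F hF (2 / R) hquot ξ
  rw [deriv_comp_sub_const, sub_self, hasDerivAt_sinSqDiv_zero.deriv, norm_one] at hsample
  have hsmall : C * (2 / R) < 1 := by
    rw [mul_div_assoc', div_lt_one (by linarith)]
    linarith [le_abs_self C]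
  linarith

/-- a sampling sequence for `B¹_π` is relatively dense. -/
theorem stmt_3 (lam : ℤ → ℝ) (hmono : StrictMono lam)
    (hsamp : ∃ C : ℝ, ∀ F : ℂ → ℂ, MemB1 Real.pi F → ∀ B : ℝ,
      (∀ k : ℤ, ‖(F (lam (k + 1)) - F (lam k)) /
          ((lam (k + 1) : ℂ) - (lam k : ℂ))‖ ≤ B) →
      ∀ x : ℝ, ‖deriv F x‖ ≤ C * B) :
    ∃ R > 0, ∀ ξ : ℝ, ∃ k : ℤ, lam k ∈ Set.Ioo (ξ - R) (ξ + R) :=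
  stmt_3_general lam hsamp
end
end

section
/- If a separated sequence Λ ⊂ ℝ is sampling for B¹_π, then Λ is sampling for the Bernstein space B_π; that is, there exists a constant C such that every F ∈ B_π with sup_{λ∈Λ}|F(λ)| ≤ 1 satisfies sup_ℝ|F| ≤ C. -/
/-!
A function `F ∈ B_π` with `|F| ≤ 1` on `Λ` has divided differences at most `2 / α` along `Λ`.
By Phragmén–Lindelöf `|F z| ≤ (sup_ℝ |F|) e^{π |Im z|}`, so the Cauchy estimate bounds `F'` on `ℝ`; thus
`F ∈ B¹_π` and sampling gives `sup_ℝ |F'| ≤ 2 C / α`. The gaps of `Λ` are bounded: if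
`λ_{k+1} - λ_k = L`, the function `sinc² (π (z - a) / 2)` centred at the midpoint `a` equals `1` at `a`
and is `O(L⁻²)` on `Λ`, so sampling bounds its derivative by `O(L⁻²)`, and the mean value theorem
across the half-gap `L / 2` gives `1 ≤ O(L⁻¹)`. (The square is what makes this decay fast enough.)
Hence every `x` lies within a bounded distance of `Λ`, and `|F x| ≤ 1 + sup_ℝ |F'| · sup gap`.
-/

open Complex

noncomputable section

lemma norm_cos_le_exp_abs_im (z : ℂ) : ‖cos z‖ ≤ Real.exp |z.im| := by
  have hexp : ∀ w : ℂ, ‖exp (w * I)‖ ≤ Real.exp |w.im| := fun w => by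
    rw [norm_exp]
    exact Real.exp_le_exp.2 (by simpa using neg_le_abs w.im)
  calc ‖cos z‖ = ‖exp (z * I) + exp (-z * I)‖ / 2 := by simp [cos]
    _ ≤ (Real.exp |z.im| + Real.exp |(-z).im|) / 2 := by
      gcongr; exact (norm_add_le _ _).trans (add_le_add (hexp z) (hexp (-z)))
    _ = Real.exp |z.im| := by simp

lemma norm_sin_le_norm_mul_exp_abs_im (w : ℂ) : ‖sin w‖ ≤ ‖w‖ * Real.exp |w.im| := by
  set S : Set ℂ := {z | z.im ≤ |w.im|} ∩ {z | -|w.im| ≤ z.im}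
  have hS : Convex ℝ S := (convex_halfSpace_im_le _).inter (convex_halfSpace_im_ge _)
  have hcos : ∀ z ∈ S, ‖deriv sin z‖ ≤ Real.exp |w.im| := fun z hz => by
    rw [Complex.deriv_sin]
    exact (norm_cos_le_exp_abs_im z).trans (Real.exp_le_exp.2 (abs_le.2 ⟨hz.2, hz.1⟩))
  have := hS.norm_image_sub_le_of_norm_deriv_le (fun z _ => differentiableAt_sin) hcos
    (x := 0) (y := w) (by simp [S]) (by simp [S, le_abs_self, neg_abs_le])
  simpa [mul_comm] using this

def sinc : ℂ → ℂ := dslope sin 0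

lemma differentiable_sinc : Differentiable ℂ sinc := by
  rw [← differentiableOn_univ]
  exact (differentiableOn_dslope Filter.univ_mem).2 differentiable_sin.differentiableOn

lemma sinc_zero : sinc 0 = 1 := by simp [sinc, dslope_same]

lemma sinc_of_ne_zero {w : ℂ} (hw : w ≠ 0) : sinc w = sin w / w := by
  simp [sinc, dslope_of_ne _ hw, slope_def_field]

lemma norm_sinc_le (w : ℂ) : ‖sinc w‖ ≤ Real.exp |w.im| := by
  rcases eq_or_ne w 0 with rfl | hw
  · simp [sinc_zero]
  rw [sinc_of_ne_zero hw, norm_div, div_le_iff₀ (norm_pos_iff.2 hw), mul_comm]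
  exact norm_sin_le_norm_mul_exp_abs_im w

lemma norm_sinc_ofReal_le {x : ℝ} (hx : x ≠ 0) : ‖sinc x‖ ≤ |x|⁻¹ := by
  rw [sinc_of_ne_zero (ofReal_ne_zero.2 hx), norm_div, ← ofReal_sin, norm_real, norm_real,
    Real.norm_eq_abs, Real.norm_eq_abs, div_eq_mul_inv]
  exact mul_le_of_le_one_left (by positivity) (Real.abs_sin_le_one x)

lemma norm_sub_le_of_norm_deriv_ofReal_le {F : ℂ → ℂ} {m : ℝ} (hF : Differentiable ℂ F)
    (hm : ∀ x : ℝ, ‖deriv F x‖ ≤ m) (s t : ℝ) : ‖F t - F s‖ ≤ m * |t - s| := by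
  have hR : Convex ℝ {z : ℂ | z.im = 0} := convex_hyperplane (.mk add_im smul_im) 0
  have hbound : ∀ z ∈ {z : ℂ | z.im = 0}, ‖deriv F z‖ ≤ m := fun z hz => by
    have hz' : (z.re : ℂ) = z := Complex.ext (by simp) (by simp [hz.out])
    simpa [hz'] using hm z.re
  simpa [← ofReal_sub] using hR.norm_image_sub_le_of_norm_deriv_le (𝕜 := ℂ)
    (fun z _ => hF z) hbound (x := s) (y := t) (by simp) (by simp)

section PhragmenLindelof

variable {F : ℂ → ℂ} {τ C M : ℝ}

/- Phragmén–Lindelöf in the right half-plane for `exp (-τ w) * F (I * w)`, which is bounded by `M`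
on the imaginary axis and by `C` on the positive real axis. -/
lemma norm_apply_I_mul_le (hF : Differentiable ℂ F) (hC : ∀ z, ‖F z‖ ≤ C * Real.exp (τ * ‖z‖))
    (hM : ∀ x : ℝ, ‖F x‖ ≤ M) {w : ℂ} (hw : 0 ≤ w.re) :
    ‖F (I * w)‖ ≤ M * Real.exp (τ * w.re) := by
  set H : ℂ → ℂ := fun w => exp (-τ * w) * F (I * w)
  have hH : ∀ w, ‖H w‖ = Real.exp (-(τ * w.re)) * ‖F (I * w)‖ := fun w => by
    simp [H, norm_exp]
  have hC0 : 0 ≤ C := by simpa using (norm_nonneg _).trans (hC 0)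
  have hgrowth : H =O[⊤] fun w => Real.exp (2 * |τ| * ‖w‖ ^ (1 : ℝ)) := by
    refine Asymptotics.IsBigO.of_bound C (Filter.Eventually.of_forall fun w => ?_)
    rw [hH, Real.norm_eq_abs, abs_of_pos (Real.exp_pos _), Real.rpow_one]
    calc Real.exp (-(τ * w.re)) * ‖F (I * w)‖
        ≤ Real.exp (|τ| * ‖w‖) * (C * Real.exp (|τ| * ‖w‖)) := by
          gcongr
          · exact (neg_le_abs _).trans (by rw [abs_mul]; gcongr; exact abs_re_le_norm w)
          · refine (hC _).trans ?_
            rw [norm_mul, norm_I, one_mul]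
            gcongr
            exact le_abs_self τ
      _ = C * Real.exp (2 * |τ| * ‖w‖) := by rw [mul_left_comm, ← Real.exp_add]; ring_nf
  have hreal : Filter.IsBoundedUnder (· ≤ ·) Filter.atTop fun x : ℝ => ‖H x‖ := by
    refine Filter.isBoundedUnder_of_eventually_le (a := C) ?_
    filter_upwards [Filter.eventually_ge_atTop 0] with x hx
    calc ‖H x‖ ≤ Real.exp (-(τ * x)) * (C * Real.exp (τ * x)) := by
          rw [hH]
          exact mul_le_mul_of_nonneg_left (by simpa [abs_of_nonneg hx] using hC (I * x))
            (Real.exp_pos _).le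
      _ = C := by rw [mul_left_comm, ← Real.exp_add]; simp
  have himag : ∀ x : ℝ, ‖H (x * I)‖ ≤ M := fun x => by
    have hx : I * (x * I) = ((-x : ℝ) : ℂ) := by push_cast; ring_nf; simp
    simpa [hH, hx] using hM (-x)
  have hHd : Differentiable ℂ H := by fun_prop
  have hHw := PhragmenLindelof.right_half_plane_of_bounded_on_real
    hHd.diffContOnCl ⟨1, one_lt_two, _, hgrowth.mono le_top⟩ hreal himag hw
  rw [hH, ← le_div_iff₀' (Real.exp_pos _), Real.exp_neg, div_inv_eq_mul] at hHw
  exact hHw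

lemma norm_le_mul_exp_abs_im (hF : Differentiable ℂ F)
    (hC : ∀ z, ‖F z‖ ≤ C * Real.exp (τ * ‖z‖)) (hM : ∀ x : ℝ, ‖F x‖ ≤ M) (z : ℂ) :
    ‖F z‖ ≤ M * Real.exp (τ * |z.im|) := by
  rcases le_total 0 z.im with h | h
  · have hz : I * (-I * z) = z := by ring_nf; simp
    have := norm_apply_I_mul_le hF hC hM (w := -I * z) (by simpa)
    rwa [hz, show (-I * z).re = |z.im| by simp [abs_of_nonneg h]] at this
  · have hz : -(I * (I * z)) = z := by ring_nf; simp
    simpa [hz, abs_of_nonpos h] using norm_apply_I_mul_le (F := fun z => F (-z)) (hF.comp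
      differentiable_neg) (fun z => by simpa using hC (-z)) (fun x => by simpa using hM (-x))
      (w := I * z) (by simpa)

end PhragmenLindelof

lemma norm_deriv_ofReal_le_of_norm_le_mul_exp_abs_im {F : ℂ → ℂ} {K τ : ℝ}
    (hF : Differentiable ℂ F) (hK : ∀ z, ‖F z‖ ≤ K * Real.exp (τ * |z.im|)) (x : ℝ) :
    ‖deriv F x‖ ≤ K * Real.exp |τ| := by
  have hK0 : 0 ≤ K := by simpa using (norm_nonneg _).trans (hK 0)
  refine le_of_le_of_eq (Complex.norm_deriv_le_of_forall_mem_sphere_norm_le one_pos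
    hF.diffContOnCl fun z hz => (hK z).trans ?_) (div_one _)
  have him : |z.im| ≤ 1 := by
    simpa [← mem_sphere_iff_norm.1 hz] using abs_im_le_norm (z - x)
  gcongr
  calc τ * |z.im| ≤ |τ| * |z.im| := by gcongr; exact le_abs_self τ
    _ ≤ |τ| := mul_le_of_le_one_right (abs_nonneg τ) him

lemma memB1_of_norm_le_mul_exp_abs_im {F : ℂ → ℂ} {K τ : ℝ} (hτ : 0 ≤ τ)
    (hF : Differentiable ℂ F) (hK : ∀ z, ‖F z‖ ≤ K * Real.exp (τ * |z.im|)) : MemB1 τ F := by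
  have hK0 : 0 ≤ K := by simpa using (norm_nonneg _).trans (hK 0)
  refine ⟨hF, ⟨K, fun z => (hK z).trans ?_⟩, _,
    norm_deriv_ofReal_le_of_norm_le_mul_exp_abs_im hF hK⟩
  gcongr
  exact abs_im_le_norm z

lemma MemB.memB1 {F : ℂ → ℂ} {τ : ℝ} (hτ : 0 ≤ τ) (hF : MemB τ F) : MemB1 τ F :=
  let ⟨hFd, ⟨_, hC⟩, ⟨_, hM⟩⟩ := hF
  memB1_of_norm_le_mul_exp_abs_im hτ hFd (norm_le_mul_exp_abs_im hFd hC hM)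

def sincSqAt (a : ℝ) (z : ℂ) : ℂ := sinc (Real.pi / 2 * (z - a)) ^ 2

lemma differentiable_sincSqAt (a : ℝ) : Differentiable ℂ (sincSqAt a) :=
  ((differentiable_sinc.comp ((differentiable_id.sub_const _).const_mul _)).pow 2 :)

lemma sincSqAt_self (a : ℝ) : sincSqAt a a = 1 := by simp [sincSqAt, sinc_zero]

lemma norm_sincSqAt_le (a : ℝ) (z : ℂ) :
    ‖sincSqAt a z‖ ≤ Real.exp (Real.pi * |z.im|) := by
  have him : |(Real.pi / 2 * (z - a)).im| = Real.pi / 2 * |z.im| := by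
    rw [show (Real.pi / 2 * (z - a)).im = Real.pi / 2 * z.im by simp, abs_mul,
      abs_of_pos (by positivity)]
  calc ‖sincSqAt a z‖ ≤ Real.exp (Real.pi / 2 * |z.im|) ^ 2 := by
        rw [sincSqAt, norm_pow, ← him]
        gcongr
        exact norm_sinc_le _
    _ = Real.exp (Real.pi * |z.im|) := by rw [← Real.exp_nat_mul]; ring_nf

lemma memB1_sincSqAt (a : ℝ) : MemB1 Real.pi (sincSqAt a) :=
  memB1_of_norm_le_mul_exp_abs_im (K := 1) Real.pi_pos.le (differentiable_sincSqAt a)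
    fun z => (norm_sincSqAt_le a z).trans_eq (one_mul _).symm

lemma norm_sincSqAt_ofReal_le {a x : ℝ} (hx : x ≠ a) : ‖sincSqAt a x‖ ≤ ((x - a) ^ 2)⁻¹ := by
  have hxa : 0 < |x - a| := abs_pos.2 (sub_ne_zero.2 hx)
  have hsinc : ‖sinc (Real.pi / 2 * (x - a) : ℝ)‖ ≤ |x - a|⁻¹ := by
    refine (norm_sinc_ofReal_le (by positivity)).trans ?_
    rw [abs_mul, abs_of_pos (by positivity : 0 < Real.pi / 2)]
    refine inv_anti₀ hxa (le_mul_of_one_le_left hxa.le ?_)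
    linarith [Real.pi_gt_three]
  rw [sincSqAt, norm_pow, ← sq_abs (x - a), ← inv_pow]
  push_cast at hsinc
  gcongr

section Sampling

variable {lam : ℤ → ℝ} {α : ℝ}

def divDiff (lam : ℤ → ℝ) (F : ℂ → ℂ) (k : ℤ) : ℂ :=
  (F (lam (k + 1)) - F (lam k)) / ((lam (k + 1) : ℂ) - (lam k : ℂ))

def IsSamplingB1 (lam : ℤ → ℝ) (C : ℝ) : Prop :=
  ∀ F : ℂ → ℂ, MemB1 Real.pi F → ∀ B : ℝ, (∀ k, ‖divDiff lam F k‖ ≤ B) →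
    ∀ x : ℝ, ‖deriv F x‖ ≤ C * B

lemma le_sub_succ_of_separated (hmono : StrictMono lam)
    (hsep : ∀ j k : ℤ, j ≠ k → α ≤ |lam j - lam k|) (k : ℤ) : α ≤ lam (k + 1) - lam k := by
  have h := hsep (k + 1) k (by omega)
  rwa [abs_of_pos (sub_pos.2 (hmono (lt_add_one k)))] at h

lemma norm_divDiff_le (hα : 0 < α) (hstep : ∀ k, α ≤ lam (k + 1) - lam k) {F : ℂ → ℂ} {b : ℝ}
    (hb : ∀ k, ‖F (lam k)‖ ≤ b) (k : ℤ) : ‖divDiff lam F k‖ ≤ 2 * b / α := by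
  have hb0 : 0 ≤ b := (norm_nonneg _).trans (hb 0)
  have hden : α ≤ ‖(lam (k + 1) : ℂ) - (lam k : ℂ)‖ := by
    rw [← ofReal_sub, norm_real, Real.norm_eq_abs]
    exact (hstep k).trans (le_abs_self _)
  have hnum : ‖F (lam (k + 1)) - F (lam k)‖ ≤ 2 * b := by
    linarith [norm_sub_le (F (lam (k + 1))) (F (lam k)), hb (k + 1), hb k]
  rw [divDiff, norm_div]
  exact div_le_div₀ (by positivity) hnum hα hden

lemma mul_sub_le_sub_of_step_le (hstep : ∀ k, α ≤ lam (k + 1) - lam k) {m n : ℤ} (h : m ≤ n) :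
    α * (n - m) ≤ lam n - lam m := by
  induction n, h using Int.leInduction with
  | base => simp
  | succ n _ ih => push_cast; linarith [hstep n]

lemma exists_le_le_succ_of_step_le (hα : 0 < α) (hstep : ∀ k, α ≤ lam (k + 1) - lam k) (x : ℝ) :
    ∃ k, lam k ≤ x ∧ x ≤ lam (k + 1) := by
  set N := (x - lam 0) / α
  have hN : α * N = x - lam 0 := mul_div_cancel₀ _ hα.ne'
  have hbelow : lam (min ⌊N⌋ 0) ≤ x := by
    set m := min ⌊N⌋ 0
    have h := mul_sub_le_sub_of_step_le hstep (min_le_right ⌊N⌋ 0)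
    have hmN : α * m ≤ α * N :=
      mul_le_mul_of_nonneg_left ((Int.cast_le.2 (min_le_left _ _)).trans (Int.floor_le N)) hα.le
    rw [Int.cast_zero] at h
    linarith
  have habove : ∀ j, lam j ≤ x → j ≤ max ⌈N⌉ 0 := fun j hj => by
    by_contra! hlt
    have h := mul_sub_le_sub_of_step_le hstep ((le_max_right _ _).trans hlt.le)
    have hNj : α * N < α * j := mul_lt_mul_of_pos_left
      ((Int.le_ceil N).trans_lt (Int.cast_lt.2 ((le_max_left _ _).trans_lt hlt))) hα
    rw [Int.cast_zero] at h
    linarith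
  obtain ⟨k, hk, hkmax⟩ := Int.exists_greatest_of_bdd ⟨_, habove⟩ ⟨_, hbelow⟩
  refine ⟨k, hk, le_of_not_gt fun h => ?_⟩
  have := hkmax (k + 1) h.le
  omega

lemma sub_le_of_isSamplingB1 {C : ℝ} (hα : 0 < α) (hmono : Monotone lam)
    (hstep : ∀ k, α ≤ lam (k + 1) - lam k) (hs : IsSamplingB1 lam C) (k : ℤ) :
    lam (k + 1) - lam k ≤ max 4 (8 * C / α) := by
  set L := lam (k + 1) - lam k
  set a := (lam k + lam (k + 1)) / 2
  have hL : 0 < L := hα.trans_le (hstep k)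
  have ha : a = lam k + L / 2 := by
    change (lam k + lam (k + 1)) / 2 = lam k + (lam (k + 1) - lam k) / 2
    ring
  have hfar : ∀ j, L / 2 ≤ |lam j - a| := fun j => by
    rcases le_or_gt j k with h | h
    · exact le_abs.2 (.inr (by linarith [hmono h]))
    · exact le_abs.2 (.inl (by linarith [hmono (show k + 1 ≤ j by omega)]))
  have hval : ∀ j, ‖sincSqAt a (lam j)‖ ≤ ((L / 2) ^ 2)⁻¹ := fun j => by
    have hj : 0 < L / 2 := by positivity
    refine (norm_sincSqAt_ofReal_le (sub_ne_zero.1 (abs_pos.1 (hj.trans_le (hfar j))))).trans ?_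
    rw [← sq_abs]
    gcongr
    exact hfar j
  have hder := hs _ (memB1_sincSqAt a) _ (norm_divDiff_le hα hstep hval)
  have key : 1 ≤ C * (2 * ((L / 2) ^ 2)⁻¹ / α) * (L / 2) + ((L / 2) ^ 2)⁻¹ :=
    calc 1 = ‖sincSqAt a a‖ := by simp [sincSqAt_self]
      _ ≤ ‖sincSqAt a a - sincSqAt a (lam k)‖ + ‖sincSqAt a (lam k)‖ := norm_le_norm_sub_add _ _
      _ ≤ C * (2 * ((L / 2) ^ 2)⁻¹ / α) * |a - lam k| + ((L / 2) ^ 2)⁻¹ :=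
        add_le_add (norm_sub_le_of_norm_deriv_ofReal_le (differentiable_sincSqAt a) hder _ _)
          (hval k)
      _ = C * (2 * ((L / 2) ^ 2)⁻¹ / α) * (L / 2) + ((L / 2) ^ 2)⁻¹ := by
        rw [ha, add_sub_cancel_left, abs_of_pos (by positivity)]
  by_contra! hlt
  have h4 : 4 < L := (le_max_left _ _).trans_lt hlt
  have h8 : 8 * C < α * L := (div_lt_iff₀' hα).1 ((le_max_right _ _).trans_lt hlt)
  field_simp at key
  nlinarith [mul_lt_mul_of_pos_right h8 hL, mul_lt_mul_of_pos_left (by nlinarith : 16 < L ^ 2) hα]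

end Sampling

/-- a separated sampling sequence for `B¹_π` is sampling
for the Bernstein space `B_π`. -/
theorem stmt_5 (lam : ℤ → ℝ) (hmono : StrictMono lam)
    (hsep : ∃ α > 0, ∀ j k : ℤ, j ≠ k → α ≤ |lam j - lam k|)
    (hsamp : ∃ C : ℝ, ∀ F : ℂ → ℂ, MemB1 Real.pi F → ∀ B : ℝ,
      (∀ k : ℤ, ‖(F (lam (k + 1)) - F (lam k)) /
          ((lam (k + 1) : ℂ) - (lam k : ℂ))‖ ≤ B) →
      ∀ x : ℝ, ‖deriv F x‖ ≤ C * B) :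
    ∃ C : ℝ, ∀ F : ℂ → ℂ, MemB Real.pi F →
      (∀ k : ℤ, ‖F (lam k)‖ ≤ 1) →
      ∀ x : ℝ, ‖F x‖ ≤ C := by
  obtain ⟨α, hα, hsep⟩ := hsep
  obtain ⟨C, hs⟩ := hsamp
  have hstep := le_sub_succ_of_separated hmono hsep
  refine ⟨1 + C * (2 * 1 / α) * max 4 (8 * C / α), fun F hF hF1 x => ?_⟩
  have hder := hs F (hF.memB1 Real.pi_pos.le) _ (norm_divDiff_le hα hstep hF1)
  have hder0 : 0 ≤ C * (2 * 1 / α) := (norm_nonneg _).trans (hder 0)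
  obtain ⟨k, hkx, hxk⟩ := exists_le_le_succ_of_step_le hα hstep x
  have hgap := sub_le_of_isSamplingB1 hα hmono.monotone hstep hs k
  calc ‖F x‖ ≤ ‖F x - F (lam k)‖ + ‖F (lam k)‖ := norm_le_norm_sub_add _ _
    _ ≤ C * (2 * 1 / α) * |x - lam k| + 1 :=
      add_le_add (norm_sub_le_of_norm_deriv_ofReal_le hF.1 hder _ _) (hF1 k)
    _ ≤ 1 + C * (2 * 1 / α) * max 4 (8 * C / α) := by
      rw [abs_of_nonneg (sub_nonneg.2 hkx)]
      nlinarith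
end
end

section
/- If Λ ⊂ ℝ is an interpolating sequence for B¹_π with interpolation constant K₀(Λ), then there exists ε > 0 such that every point λ ∈ Λ has at most two points of Λ within distance ε: #(Λ ∩ {ζ : |ζ - λ| < ε}) ≤ 2. Consequently Λ is a union of two separated sequences. -/
/-!
Interpolate the bump that equals `g = min(λ_b - λ_{b-1}, λ_{b+1} - λ_b)` at `λ_b` and vanishes at
the other nodes: its divided differences are at most `1`, so the interpolant `F` has `|F'| ≤ K₀`
on `ℝ`. A weak Bernstein inequality, `|F''| ≤ K₀ e^π` on `ℝ` (Phragmén–Lindelöf in half-planes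
bounds `F'` by `K₀ e^{π |Im z|}`, then Cauchy's estimate on unit circles), and the mean value
theorem applied three times to `Re F`, which vanishes at `λ_{b±1}`, give
`g ≤ K₀ e^π (λ_b - λ_{b-1}) (λ_{b+1} - λ_b)`, hence `λ_{b+1} - λ_{b-1} ≥ 1 / (K₀ e^π)`.
So even-indexed and odd-indexed points are separated, and no ball of radius `1 / (2 K₀ e^π)`
around a node contains three nodes.
-/

open Complex

noncomputable section

/-- A set of reals is separated. -/
def SepSet (Λ : Set ℝ) : Prop :=
  ∃ α > 0, ∀ x ∈ Λ, ∀ y ∈ Λ, x ≠ y → α ≤ |x - y|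

open Metric Set

lemma mul_le_abs_add_mul {τ s t : ℝ} (h : |s - t| ≤ 1) : τ * s ≤ |τ| + τ * t := by
  have : τ * (s - t) ≤ |τ| := calc
    τ * (s - t) ≤ |τ * (s - t)| := le_abs_self _
    _ = |τ| * |s - t| := abs_mul _ _
    _ ≤ |τ| := mul_le_of_le_one_right (abs_nonneg τ) h
  linarith

namespace ExpType

variable {f : ℂ → ℂ} {τ : ℝ}

lemma exists_nonneg (h : ExpType τ f) :
    ∃ C, 0 ≤ C ∧ ∀ z, ‖f z‖ ≤ C * Real.exp (τ * ‖z‖) := by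
  obtain ⟨C, hC⟩ := h
  exact ⟨C, (norm_nonneg _).trans (by simpa using hC 0), hC⟩

lemma deriv (hf : Differentiable ℂ f) (h : ExpType τ f) : ExpType τ (deriv f) := by
  obtain ⟨C, hC0, hC⟩ := h.exists_nonneg
  refine ⟨C * Real.exp |τ|, fun z => ?_⟩
  have hsphere : ∀ w ∈ sphere z 1, ‖f w‖ ≤ C * Real.exp |τ| * Real.exp (τ * ‖z‖) := by
    intro w hw
    have hdist : |‖w‖ - ‖z‖| ≤ 1 := by
      simpa [mem_sphere_iff_norm.mp hw] using abs_norm_sub_norm_le w z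
    calc ‖f w‖ ≤ C * Real.exp (τ * ‖w‖) := hC w
      _ ≤ C * Real.exp (|τ| + τ * ‖z‖) := by gcongr; exact mul_le_abs_add_mul hdist
      _ = C * Real.exp |τ| * Real.exp (τ * ‖z‖) := by rw [Real.exp_add, mul_assoc]
  simpa using norm_deriv_le_of_forall_mem_sphere_norm_le one_pos hf.diffContOnCl hsphere

lemma norm_le_of_im_nonneg (hf : Differentiable ℂ f) (h : ExpType τ f) {M : ℝ}
    (hM : ∀ x : ℝ, ‖f x‖ ≤ M) {z : ℂ} (hz : 0 ≤ z.im) :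
    ‖f z‖ ≤ M * Real.exp (τ * z.im) := by
  obtain ⟨C, hC0, hC⟩ := h.exists_nonneg
  -- `g` is bounded by `M` on the imaginary axis and by `C` on the positive real axis.
  set g : ℂ → ℂ := fun w => cexp (-τ * w) * f (I * w)
  have hg : ∀ w, ‖g w‖ = Real.exp (-(τ * w.re)) * ‖f (I * w)‖ := fun w => by
    simp [g, Complex.norm_exp]
  have hgM : ∀ w : ℂ, 0 ≤ w.re → ‖g w‖ ≤ M := by
    intro w hw
    refine PhragmenLindelof.right_half_plane_of_bounded_on_real
      (Differentiable.diffContOnCl (by fun_prop)) ⟨1, one_lt_two, 2 * |τ|, ?_⟩ ?_ ?_ hw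
    · refine Asymptotics.IsBigO.of_bound C (Filter.Eventually.of_forall fun v => ?_)
      have hre : -(τ * v.re) ≤ |τ| * ‖v‖ := calc
        -(τ * v.re) ≤ |τ * v.re| := neg_le_abs _
        _ = |τ| * |v.re| := abs_mul _ _
        _ ≤ |τ| * ‖v‖ := by gcongr; exact abs_re_le_norm v
      have hfv : ‖f (I * v)‖ ≤ C * Real.exp (|τ| * ‖v‖) := by
        refine (hC _).trans ?_
        rw [norm_mul, norm_I, one_mul]
        gcongr
        exact le_abs_self τ
      calc ‖g v‖ = Real.exp (-(τ * v.re)) * ‖f (I * v)‖ := hg v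
        _ ≤ Real.exp (|τ| * ‖v‖) * (C * Real.exp (|τ| * ‖v‖)) := by gcongr
        _ = C * ‖Real.exp (2 * |τ| * ‖v‖ ^ (1 : ℝ))‖ := by
          rw [Real.rpow_one, Real.norm_of_nonneg (Real.exp_pos _).le, mul_left_comm,
            ← Real.exp_add]
          ring_nf
    · refine Filter.isBoundedUnder_of_eventually_le (a := C) ?_
      filter_upwards [Filter.eventually_ge_atTop 0] with x hx
      have hfx : ‖f (I * x)‖ ≤ C * Real.exp (τ * x) := by
        simpa [abs_of_nonneg hx] using hC (I * x)
      calc ‖g x‖ = Real.exp (-(τ * x)) * ‖f (I * x)‖ := by simpa using hg x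
        _ ≤ Real.exp (-(τ * x)) * (C * Real.exp (τ * x)) := by gcongr
        _ = C := by rw [mul_left_comm, ← Real.exp_add, neg_add_cancel, Real.exp_zero, mul_one]
    · intro x
      simpa [hg, mul_left_comm I, ← ofReal_neg] using hM (-x)
  have := hgM (-I * z) (by simpa using hz)
  have hIz : I * (-I * z) = z := by rw [← mul_assoc, mul_neg, I_mul_I, neg_neg, one_mul]
  rw [hg, hIz, show (-I * z).re = z.im by simp, Real.exp_neg, inv_mul_le_iff₀ (Real.exp_pos _)]
    at this
  linarith

lemma norm_le_mul_exp_abs_im (hf : Differentiable ℂ f) (h : ExpType τ f) {M : ℝ}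
    (hM : ∀ x : ℝ, ‖f x‖ ≤ M) (z : ℂ) : ‖f z‖ ≤ M * Real.exp (τ * |z.im|) := by
  rcases le_total 0 z.im with hz | hz
  · rw [abs_of_nonneg hz]
    exact h.norm_le_of_im_nonneg hf hM hz
  · obtain ⟨C, hC⟩ := h
    have hneg : ExpType τ (fun w => f (-w)) := ⟨C, fun w => by simpa using hC (-w)⟩
    have := hneg.norm_le_of_im_nonneg (hf.comp differentiable_neg)
      (fun x => by simpa using hM (-x)) (z := -z) (by simpa using hz)
    rw [abs_of_nonpos hz]
    simpa using this

end ExpType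

lemma norm_deriv_deriv_le_of_expType {f : ℂ → ℂ} {τ : ℝ} (hf : Differentiable ℂ f)
    (h : ExpType τ f) {M : ℝ} (hM : ∀ x : ℝ, ‖deriv f x‖ ≤ M) (x : ℝ) :
    ‖deriv (deriv f) x‖ ≤ M * Real.exp |τ| := by
  have hM0 : 0 ≤ M := (norm_nonneg _).trans (hM 0)
  have hsphere : ∀ w ∈ sphere (x : ℂ) 1, ‖deriv f w‖ ≤ M * Real.exp |τ| := by
    intro w hw
    have him : |w.im| ≤ 1 := by
      simpa [← mem_sphere_iff_norm.mp hw] using abs_im_le_norm (w - x)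
    calc ‖deriv f w‖ ≤ M * Real.exp (τ * |w.im|) :=
          (h.deriv hf).norm_le_mul_exp_abs_im hf.deriv hM w
      _ ≤ M * Real.exp |τ| := by
        gcongr
        simpa using mul_le_abs_add_mul (τ := τ) (t := 0) (by simpa using him)
  simpa using norm_deriv_le_of_forall_mem_sphere_norm_le one_pos hf.deriv.diffContOnCl hsphere

lemma abs_le_mul_of_eq_zero_of_eq_zero {u u' u'' : ℝ → ℝ} {L x₀ x₁ x₂ : ℝ}
    (hu : ∀ x, HasDerivAt u (u' x) x) (hu' : ∀ x, HasDerivAt u' (u'' x) x)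
    (hL : ∀ x, |u'' x| ≤ L) (h₀₁ : x₀ < x₁) (h₁₂ : x₁ < x₂) (h₀ : u x₀ = 0) (h₂ : u x₂ = 0) :
    |u x₁| ≤ L * ((x₁ - x₀) * (x₂ - x₁)) := by
  obtain ⟨ξ₁, hξ₁, hslope₁⟩ := exists_hasDerivAt_eq_slope u u' h₀₁
    (fun x _ => (hu x).continuousAt.continuousWithinAt) (fun x _ => hu x)
  obtain ⟨ξ₂, hξ₂, hslope₂⟩ := exists_hasDerivAt_eq_slope u u' h₁₂
    (fun x _ => (hu x).continuousAt.continuousWithinAt) (fun x _ => hu x)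
  obtain ⟨η, -, hη⟩ := exists_hasDerivAt_eq_slope u' u'' (hξ₁.2.trans hξ₂.1)
    (fun x _ => (hu' x).continuousAt.continuousWithinAt) (fun x _ => hu' x)
  have hd₁ : 0 < x₁ - x₀ := sub_pos.2 h₀₁
  have hd₂ : 0 < x₂ - x₁ := sub_pos.2 h₁₂
  have hξ : 0 < ξ₂ - ξ₁ := sub_pos.2 (hξ₁.2.trans hξ₂.1)
  have hslopes : (u' ξ₂ - u' ξ₁) * ((x₁ - x₀) * (x₂ - x₁)) = -(u x₁ * (x₂ - x₀)) := by
    rw [hslope₁, hslope₂, h₀, h₂]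
    field_simp
    ring
  have hL' : |u'' η| * (ξ₂ - ξ₁) ≤ L * (x₂ - x₀) :=
    mul_le_mul (hL η) (by linarith [hξ₁.1, hξ₂.2]) hξ.le ((abs_nonneg _).trans (hL η))
  have hkey : |u x₁| * (x₂ - x₀) ≤ L * ((x₁ - x₀) * (x₂ - x₁)) * (x₂ - x₀) := calc
    |u x₁| * (x₂ - x₀) = |u'' η| * (ξ₂ - ξ₁) * ((x₁ - x₀) * (x₂ - x₁)) := by
      rw [hη, abs_div, abs_of_pos hξ, div_mul_cancel₀ _ hξ.ne', ← abs_of_pos (mul_pos hd₁ hd₂),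
        ← abs_mul, hslopes, abs_neg, abs_mul, abs_of_pos (by linarith : 0 < x₂ - x₀)]
    _ ≤ L * (x₂ - x₀) * ((x₁ - x₀) * (x₂ - x₁)) := by gcongr
    _ = L * ((x₁ - x₀) * (x₂ - x₁)) * (x₂ - x₀) := by ring
  exact le_of_mul_le_mul_right hkey (by linarith)

def IsB1Interpolating (lam : ℤ → ℝ) (K0 : ℝ) : Prop :=
  ∀ (a : ℤ → ℂ) (B : ℝ),
    (∀ j k : ℤ, j ≠ k → ‖(a j - a k) / ((lam j : ℂ) - (lam k : ℂ))‖ ≤ B) →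
    ∃ F : ℂ → ℂ, MemB1 Real.pi F ∧ (∀ k : ℤ, F (lam k) = a k) ∧
      ∀ x : ℝ, ‖deriv F x‖ ≤ K0 * B

lemma min_sub_le_abs_sub {lam : ℤ → ℝ} (hmono : Monotone lam) {b k : ℤ} (hk : k ≠ b) :
    min (lam b - lam (b - 1)) (lam (b + 1) - lam b) ≤ |lam b - lam k| := by
  rcases hk.lt_or_gt with hkb | hkb
  · have := hmono (show k ≤ b - 1 by omega)
    exact (min_le_left _ _).trans (by linarith [le_abs_self (lam b - lam k)])
  · have := hmono (show b + 1 ≤ k by omega)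
    exact (min_le_right _ _).trans (by linarith [neg_abs_le (lam b - lam k)])

lemma norm_div_sub_single_le_one {lam : ℤ → ℝ} {b : ℤ} {g : ℝ} (hg : 0 ≤ g)
    (hsep : ∀ k, k ≠ b → g ≤ |lam b - lam k|) {j k : ℤ} (hjk : j ≠ k) :
    ‖((Pi.single b (g : ℂ) : ℤ → ℂ) j - (Pi.single b (g : ℂ) : ℤ → ℂ) k) /
      ((lam j : ℂ) - (lam k : ℂ))‖ ≤ 1 := by
  rw [norm_div, ← ofReal_sub, norm_real, Real.norm_eq_abs]
  by_cases hj : j = b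
  · subst hj
    simpa [hjk.symm, abs_of_nonneg hg] using div_le_one_of_le₀ (hsep k hjk.symm) (abs_nonneg _)
  · by_cases hk : k = b
    · subst hk
      simpa [hj, abs_of_nonneg hg, abs_sub_comm] using
        div_le_one_of_le₀ (hsep j hj) (abs_nonneg _)
    · simp [hj, hk]

namespace IsB1Interpolating

variable {lam : ℤ → ℝ} {K0 : ℝ}

lemma one_le_mul_sub (hmono : StrictMono lam) (hinterp : IsB1Interpolating lam K0) (b : ℤ) :
    1 ≤ K0 * Real.exp Real.pi * (lam (b + 1) - lam (b - 1)) := by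
  set d₁ := lam b - lam (b - 1)
  set d₂ := lam (b + 1) - lam b
  have hd₁ : 0 < d₁ := sub_pos.2 (hmono (by omega))
  have hd₂ : 0 < d₂ := sub_pos.2 (hmono (by omega))
  have hg : 0 < min d₁ d₂ := lt_min hd₁ hd₂
  obtain ⟨F, ⟨hFd, hFexp, -⟩, hFval, hF'⟩ := hinterp (Pi.single b ((min d₁ d₂ : ℝ) : ℂ)) 1
    fun j k hjk => norm_div_sub_single_le_one hg.le
      (fun k hk => min_sub_le_abs_sub hmono.monotone hk) hjk
  have hF'' : ∀ x : ℝ, ‖deriv (deriv F) x‖ ≤ K0 * Real.exp Real.pi := by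
    simpa [abs_of_pos Real.pi_pos] using
      norm_deriv_deriv_le_of_expType hFd hFexp (M := K0) (by simpa using hF')
  have hbump := abs_le_mul_of_eq_zero_of_eq_zero (u := fun t : ℝ => (F t).re)
    (fun x => (hFd x).hasDerivAt.real_of_complex)
    (fun x => (hFd.deriv x).hasDerivAt.real_of_complex)
    (fun x => (abs_re_le_norm _).trans (hF'' x))
    (hmono (by omega : b - 1 < b)) (hmono (by omega : b < b + 1))
    (by simp [hFval]) (by simp [hFval])
  simp only [hFval, Pi.single_eq_same, ofReal_re, abs_of_pos hg] at hbump
  have hmax : 1 ≤ K0 * Real.exp Real.pi * max d₁ d₂ := by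
    refine le_of_mul_le_mul_left ?_ hg
    calc min d₁ d₂ * 1 ≤ K0 * Real.exp Real.pi * (d₁ * d₂) := by rw [mul_one]; exact hbump
      _ = min d₁ d₂ * (K0 * Real.exp Real.pi * max d₁ d₂) := by rw [← min_mul_max d₁ d₂]; ring
  have hL : 0 < K0 * Real.exp Real.pi :=
    pos_of_mul_pos_left (one_pos.trans_le hmax) (hd₁.le.trans (le_max_left _ _))
  calc 1 ≤ K0 * Real.exp Real.pi * max d₁ d₂ := hmax
    _ ≤ K0 * Real.exp Real.pi * (lam (b + 1) - lam (b - 1)) := by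
      gcongr
      exact max_le (by linarith) (by linarith)

lemma exists_pos_le_sub (hmono : StrictMono lam) (hinterp : IsB1Interpolating lam K0) :
    ∃ δ > 0, ∀ b, δ ≤ lam (b + 1) - lam (b - 1) := by
  have hL : 0 < K0 * Real.exp Real.pi := by
    have h := hinterp.one_le_mul_sub hmono 0
    have := sub_pos.2 (hmono (show (0 : ℤ) - 1 < 0 + 1 by omega))
    by_contra! hL
    nlinarith
  refine ⟨1 / (K0 * Real.exp Real.pi), by positivity, fun b => ?_⟩
  rw [div_le_iff₀' hL]
  exact hinterp.one_le_mul_sub hmono b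

end IsB1Interpolating

section Gaps

variable {lam : ℤ → ℝ} {δ : ℝ}

lemma le_sub_of_add_two_le (hmono : Monotone lam)
    (hgap : ∀ b, δ ≤ lam (b + 1) - lam (b - 1)) {p q : ℤ} (hpq : p + 2 ≤ q) :
    δ ≤ lam q - lam p := by
  have := hgap (p + 1)
  rw [add_assoc, one_add_one_eq_two, add_sub_cancel_right] at this
  linarith [hmono hpq]

lemma not_three_abs_sub_lt_half (hmono : Monotone lam)
    (hgap : ∀ b, δ ≤ lam (b + 1) - lam (b - 1)) (k j₁ j₂ j₃ : ℤ) (h₁₂ : j₁ ≠ j₂) (h₁₃ : j₁ ≠ j₃)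
    (h₂₃ : j₂ ≠ j₃) :
    ¬(|lam j₁ - lam k| < δ / 2 ∧ |lam j₂ - lam k| < δ / 2 ∧ |lam j₃ - lam k| < δ / 2) := by
  rintro ⟨h₁, h₂, h₃⟩
  have hclose : ∀ j, j = j₁ ∨ j = j₂ ∨ j = j₃ → |lam j - lam k| < δ / 2 := by
    rintro j (rfl | rfl | rfl) <;> assumption
  have hp := abs_sub_lt_iff.mp (hclose (min j₁ (min j₂ j₃)) (by omega))
  have hq := abs_sub_lt_iff.mp (hclose (max j₁ (max j₂ j₃)) (by omega))
  have := le_sub_of_add_two_le hmono hgap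
    (show min j₁ (min j₂ j₃) + 2 ≤ max j₁ (max j₂ j₃) by omega)
  linarith [hp.2, hq.1]

lemma sepSet_range_of_le_sub_succ {μ : ℤ → ℝ} (hδ : 0 < δ) (hstep : ∀ n, δ ≤ μ (n + 1) - μ n) :
    SepSet (range μ) := by
  have hmono : Monotone μ := monotone_int_of_le_succ fun n => by linarith [hstep n]
  have hlt : ∀ m n, m < n → δ ≤ |μ m - μ n| := fun m n h => by
    rw [abs_sub_comm]
    linarith [hstep m, hmono (show m + 1 ≤ n by omega), le_abs_self (μ n - μ m)]
  refine ⟨δ, hδ, ?_⟩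
  rintro _ ⟨m, rfl⟩ _ ⟨n, rfl⟩ hne
  rcases (ne_of_apply_ne μ hne).lt_or_gt with h | h
  · exact hlt m n h
  · rw [abs_sub_comm]
    exact hlt n m h

lemma exists_range_eq_union_sepSet (hδ : 0 < δ) (hgap : ∀ b, δ ≤ lam (b + 1) - lam (b - 1)) :
    ∃ Λ₁ Λ₂ : Set ℝ, range lam = Λ₁ ∪ Λ₂ ∧ SepSet Λ₁ ∧ SepSet Λ₂ := by
  refine ⟨range fun n => lam (2 * n), range fun n => lam (2 * n + 1), ?_,
    sepSet_range_of_le_sub_succ hδ fun n => ?_, sepSet_range_of_le_sub_succ hδ fun n => ?_⟩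
  · ext x
    simp only [mem_range, mem_union]
    constructor
    · rintro ⟨j, rfl⟩
      obtain ⟨n, rfl | rfl⟩ := Int.even_or_odd' j
      exacts [Or.inl ⟨n, rfl⟩, Or.inr ⟨n, rfl⟩]
    · rintro (⟨n, rfl⟩ | ⟨n, rfl⟩) <;> exact ⟨_, rfl⟩
  · convert hgap (2 * n + 1) using 3 <;> ring
  · convert hgap (2 * n + 2) using 3 <;> ring

end Gaps

/-- an interpolating sequence for `B¹_π` (with interpolation
constant `K₀`) has at most two points in every `ε`-ball around each of its
points, for some `ε > 0`; consequently it is a union of two separated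
sequences. -/
theorem stmt_6 (lam : ℤ → ℝ) (hmono : StrictMono lam) (K0 : ℝ)
    (hinterp : ∀ (a : ℤ → ℂ) (B : ℝ),
      (∀ j k : ℤ, j ≠ k →
        ‖(a j - a k) / ((lam j : ℂ) - (lam k : ℂ))‖ ≤ B) →
      ∃ F : ℂ → ℂ, MemB1 Real.pi F ∧ (∀ k : ℤ, F (lam k) = a k) ∧
        ∀ x : ℝ, ‖deriv F x‖ ≤ K0 * B) :
    (∃ ε > 0, ∀ k j₁ j₂ j₃ : ℤ, j₁ ≠ j₂ → j₁ ≠ j₃ → j₂ ≠ j₃ →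
      ¬(|lam j₁ - lam k| < ε ∧ |lam j₂ - lam k| < ε ∧ |lam j₃ - lam k| < ε)) ∧
    (∃ Λ₁ Λ₂ : Set ℝ, Set.range lam = Λ₁ ∪ Λ₂ ∧ SepSet Λ₁ ∧ SepSet Λ₂) := by
  obtain ⟨δ, hδ, hgap⟩ := IsB1Interpolating.exists_pos_le_sub hmono hinterp
  exact ⟨⟨δ / 2, half_pos hδ, not_three_abs_sub_lt_half hmono.monotone hgap⟩,
    exists_range_eq_union_sepSet hδ hgap⟩
end
end

section
/- Let f ∈ B¹_π \ B_π (entire of exponential type π, f' bounded on ℝ, but f unbounded on ℝ), and let A > 0. Let Z_A(f) be the set of zeros of f in the strip {z : |Im z| < A}. Then the lower Beurling density of Z_A(f) is zero: lim_{R→∞} inf_{x∈ℝ} #(Z_A(f) ∩ {z : x < Re z < x+R}) / R = 0. -/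
open Complex

noncomputable section

/-- The zeros of `f` in the horizontal strip `|Im z| < A` whose real part lies
in the window `(x, x + R)`. -/
def stripZeros (f : ℂ → ℂ) (A x R : ℝ) : Set ℂ :=
  {z : ℂ | f z = 0 ∧ |z.im| < A ∧ x < z.re ∧ z.re < x + R}

/-!
Phragmén–Lindelöf, applied to `f'` twisted by `e^{±iτz}`, upgrades the bound `|f'| ≤ M` on `ℝ` to
`|f'(z)| ≤ M e^{τ|Im z|}`, so `f` is Lipschitz on every closed strip `|Im z| ≤ A`. Since `|f|` is
unbounded on `ℝ`, for every `R` there is a real `x₀` with `|f(x₀)|` larger than the Lipschitz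
constant times `R/2 + A`; then `f` has no zero in the strip within real distance `R/2` of `x₀`.
So there are arbitrarily long zero-free windows and the lower density vanishes.
-/

open Set Filter Asymptotics
open scoped NNReal

theorem expType_deriv {τ : ℝ} {F : ℂ → ℂ} (hF : Differentiable ℂ F) (hτ : 0 ≤ τ)
    (h : ExpType τ F) : ExpType τ (deriv F) := by
  obtain ⟨C, hC⟩ := h
  have hC0 : 0 ≤ C := by simpa using (norm_nonneg _).trans (hC 0)
  refine ⟨C * Real.exp τ, fun z => ?_⟩
  have hsphere : ∀ w ∈ Metric.sphere z 1, ‖F w‖ ≤ C * Real.exp τ * Real.exp (τ * ‖z‖) := by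
    intro w hw
    have hw' : ‖w‖ ≤ ‖z‖ + 1 := by
      simpa [mem_sphere_iff_norm.mp hw] using norm_le_norm_add_norm_sub' w z
    calc ‖F w‖ ≤ C * Real.exp (τ * ‖w‖) := hC w
      _ ≤ C * Real.exp (τ * (‖z‖ + 1)) := by gcongr
      _ = C * Real.exp τ * Real.exp (τ * ‖z‖) := by rw [mul_add, mul_one, Real.exp_add]; ring
  simpa using Complex.norm_deriv_le_of_forall_mem_sphere_norm_le one_pos hF.diffContOnCl hsphere

theorem norm_le_mul_exp_mul_im_of_im_nonneg {G : ℂ → ℂ} {τ M : ℝ} (hG : Differentiable ℂ G)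
    (hτ : 0 ≤ τ) (hexp : ExpType τ G) (hM : ∀ x : ℝ, ‖G x‖ ≤ M) {z : ℂ} (hz : 0 ≤ z.im) :
    ‖G z‖ ≤ M * Real.exp (τ * z.im) := by
  obtain ⟨C, hC⟩ := hexp
  set H : ℂ → ℂ := fun w => G (I * w) * cexp (-(τ * w))
  have hH : ∀ w, ‖H w‖ = ‖G (I * w)‖ * Real.exp (-(τ * w.re)) := by
    intro w
    simp [H, Complex.norm_exp]
  -- `H` is `G` on the upper half-plane rotated onto the right one and twisted by `e^{-τw}`:
  -- bounded by `C` on the positive reals and by `M` on the imaginary axis.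
  have hHz : ‖H (-I * z)‖ ≤ M := by
    refine PhragmenLindelof.right_half_plane_of_bounded_on_real ?_ ?_ ?_ (fun y => ?_) ?_
    · exact ((differentiable_const I).mul differentiable_id |> hG.comp).mul
        ((differentiable_const _).mul differentiable_id).neg.cexp |>.diffContOnCl
    · refine ⟨1, one_lt_two, τ, IsBigO.of_bound C (eventually_inf_principal.2
        (Eventually.of_forall fun w hw => ?_))⟩
      have hre : 0 < w.re := hw
      rw [hH, Real.rpow_one, Real.norm_of_nonneg (Real.exp_pos _).le]
      calc ‖G (I * w)‖ * Real.exp (-(τ * w.re)) ≤ C * Real.exp (τ * ‖I * w‖) * 1 := by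
            refine mul_le_mul (hC _) ?_ (Real.exp_pos _).le ((norm_nonneg _).trans (hC _))
            rw [Real.exp_le_one_iff]; nlinarith
        _ = C * Real.exp (τ * ‖w‖) := by simp
    · refine isBoundedUnder_of_eventually_le (a := C) ((eventually_ge_atTop 0).mono fun x hx => ?_)
      calc ‖H x‖ = ‖G (I * x)‖ * Real.exp (-(τ * x)) := by simp [hH]
        _ ≤ C * Real.exp (τ * x) * Real.exp (-(τ * x)) := by
            gcongr
            simpa [abs_of_nonneg hx] using hC (I * x)
        _ = C := by rw [mul_assoc, ← Real.exp_add]; simp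
    · have hy : I * (y * I) = ((-y : ℝ) : ℂ) := by push_cast; ring_nf; simp
      simpa [hH, hy] using hM (-y)
    · simpa using hz
  have hIz : I * (-I * z) = z := by ring_nf; simp
  have hIz_re : (-I * z).re = z.im := by simp
  rwa [hH, hIz, hIz_re, Real.exp_neg, ← div_eq_mul_inv, div_le_iff₀ (Real.exp_pos _)] at hHz

theorem norm_le_mul_exp_mul_abs_im {G : ℂ → ℂ} {τ M : ℝ} (hG : Differentiable ℂ G) (hτ : 0 ≤ τ)
    (hexp : ExpType τ G) (hM : ∀ x : ℝ, ‖G x‖ ≤ M) (z : ℂ) :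
    ‖G z‖ ≤ M * Real.exp (τ * |z.im|) := by
  rcases le_total 0 z.im with hz | hz
  · rw [abs_of_nonneg hz]
    exact norm_le_mul_exp_mul_im_of_im_nonneg hG hτ hexp hM hz
  · obtain ⟨C, hC⟩ := hexp
    have hneg := norm_le_mul_exp_mul_im_of_im_nonneg (G := fun w => G (-w))
      (hG.comp differentiable_neg) hτ ⟨C, fun w => by simpa using hC (-w)⟩
      (fun x => by simpa using hM (-x)) (z := -z) (by simpa using hz)
    simpa [abs_of_nonpos hz] using hneg

theorem MemB1.exists_lipschitzOnWith_strip {τ : ℝ} {f : ℂ → ℂ} (hf : MemB1 τ f) (hτ : 0 ≤ τ)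
    (A : ℝ) : ∃ K : ℝ≥0, LipschitzOnWith K f (im ⁻¹' Icc (-A) A) := by
  obtain ⟨hdiff, hexp, M, hM⟩ := hf
  have hM0 : 0 ≤ M := (norm_nonneg _).trans (hM 0)
  have hderiv : Differentiable ℂ (deriv f) :=
    (contDiff_infty_iff_deriv.mp hdiff.contDiff).2.differentiable (by simp)
  have hbound := norm_le_mul_exp_mul_abs_im hderiv hτ (expType_deriv hdiff hτ hexp) hM
  refine ⟨(M * Real.exp (τ * A)).toNNReal, ?_⟩
  have hstrip : Convex ℝ (im ⁻¹' Icc (-A) A) :=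
    (convex_Icc (-A) A).is_linear_preimage (.mk add_im smul_im)
  refine hstrip.lipschitzOnWith_of_nnnorm_deriv_le (fun z _ => hdiff z) fun z hz => ?_
  rw [Real.le_toNNReal_iff_coe_le (by positivity), coe_nnnorm]
  exact (hbound z).trans (by gcongr; exact abs_le.mpr hz)

theorem stripZeros_eq_empty_of_lipschitzOnWith {f : ℂ → ℂ} {A x₀ R : ℝ} {K : ℝ≥0}
    (hf : LipschitzOnWith K f (im ⁻¹' Icc (-A) A)) (hx₀ : K * (R / 2 + A) < ‖f x₀‖) :
    stripZeros f A (x₀ - R / 2) R = ∅ := by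
  refine eq_empty_iff_forall_notMem.2 fun z ⟨hz0, him, hlo, hhi⟩ => hx₀.not_ge ?_
  have hA : 0 ≤ A := (abs_nonneg _).trans him.le
  have hzS : z ∈ im ⁻¹' Icc (-A) A := abs_le.mp him.le
  have hx₀S : (x₀ : ℂ) ∈ im ⁻¹' Icc (-A) A := by simpa using hA
  have hdist : ‖(x₀ : ℂ) - z‖ ≤ R / 2 + A := by
    refine (norm_le_abs_re_add_abs_im _).trans ?_
    have hre : |x₀ - z.re| ≤ R / 2 := abs_le.mpr ⟨by linarith, by linarith⟩
    simpa using add_le_add hre him.le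
  calc ‖f x₀‖ = ‖f x₀ - f z‖ := by rw [hz0, sub_zero]
    _ ≤ K * ‖(x₀ : ℂ) - z‖ := by simpa [dist_eq_norm] using hf.dist_le_mul _ hx₀S _ hzS
    _ ≤ K * (R / 2 + A) := by gcongr

theorem stmt_14_general (f : ℂ → ℂ) (hf : MemB1 Real.pi f)
    (hunb : ¬ ∃ M : ℝ, ∀ x : ℝ, ‖f x‖ ≤ M) (A : ℝ) :
    ∀ d > 0, ∃ R₀ > 0, ∀ R ≥ R₀, ∃ x : ℝ,
      (stripZeros f A x R).Finite ∧
      (Nat.card (stripZeros f A x R) : ℝ) ≤ d * R := by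
  obtain ⟨K, hK⟩ := hf.exists_lipschitzOnWith_strip Real.pi_pos.le A
  simp only [not_exists, not_forall, not_le] at hunb
  intro d hd
  refine ⟨1, one_pos, fun R hR => ?_⟩
  obtain ⟨x₀, hx₀⟩ := hunb (K * (R / 2 + A))
  have hempty := stripZeros_eq_empty_of_lipschitzOnWith hK hx₀
  refine ⟨x₀ - R / 2, by simp [hempty], ?_⟩
  rw [hempty, Nat.card_of_isEmpty, Nat.cast_zero]
  positivity

/-- if `f ∈ B¹_π` is unbounded on `ℝ`, then for every `A > 0`
the zero set of `f` in the strip `|Im z| < A` has lower Beurling density `0`. -/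
theorem stmt_14 (f : ℂ → ℂ) (hf : MemB1 Real.pi f)
    (hunb : ¬ ∃ M : ℝ, ∀ x : ℝ, ‖f x‖ ≤ M) (A : ℝ) (hA : 0 < A) :
    ∀ d > 0, ∃ R₀ > 0, ∀ R ≥ R₀, ∃ x : ℝ,
      (stripZeros f A x R).Finite ∧
      (Nat.card (stripZeros f A x R) : ℝ) ≤ d * R :=
  stmt_14_general f hf hunb A
end
end
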